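/- Let θ be a primitive substitution of constant length r on 𝒜 and let θ' be its reduction on the quotient alphabet 𝒜' = 𝒜/∼. Then c(θ') = c(θ) =: c; the map f': 𝒜' → {1,…,c} given by f'([a]) = f(a) is well defined; and, with σ'_{M',j} the permutations of {1,…,c} defined from θ' and f' in the same way as σ_{M,j} from θ and f, one has {σ_{M,j} : M ∈ 𝒳(θ), 0 ≤ j < r} = {σ'_{M',j} : M' ∈ 𝒳(θ'), 0 ≤ j < r}; in particular G(θ) = G(θ'). -/

import Mathlib

open scoped Classical

noncomputable section

/-- The product topology on `ℤ → A`, where the alphabet `A` carries the discrete topology. -/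
abbrev seqTop (A : Type*) : TopologicalSpace (ℤ → A) :=
  @Pi.topologicalSpace ℤ (fun _ => A) (fun _ => ⊥)

/-- The left shift map `σ`. -/
def shiftMap {A : Type*} (x : ℤ → A) : ℤ → A := fun n => x (n + 1)

/-- The shift by `m` steps, i.e. `σ ^ m`. -/
def shiftBy {A : Type*} (m : ℤ) (x : ℤ → A) : ℤ → A := fun n => x (n + m)

/-- The coordinatewise extension of a letter-to-letter map. -/
def codeMap {A B : Type*} (τ : A → B) : (ℤ → A) → (ℤ → B) := fun x n => τ (x n)

/-- The closure of the two-sided shift orbit of `x`. -/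
def orbitClosure {A : Type*} (x : ℤ → A) : Set (ℤ → A) :=
  @closure _ (seqTop A) (Set.range fun m : ℤ => shiftBy m x)

/-- A subshift: a nonempty, closed, shift-invariant subset of `ℤ → A`. -/
def IsSubshift {A : Type*} (X : Set (ℤ → A)) : Prop :=
  X.Nonempty ∧ @IsClosed _ (seqTop A) X ∧ shiftMap '' X = X

/-- A minimal subshift: every orbit is dense. -/
def IsMinimalSubshift {A : Type*} (X : Set (ℤ → A)) : Prop :=
  IsSubshift X ∧ ∀ x ∈ X, X ⊆ orbitClosure x

/-- `substPow θ r k a j` is the `(j+1)`-st letter of `θ^k(a)`, meaningful for `j < r ^ k`. -/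
def substPow {A : Type*} (θ : A → ℕ → A) (r : ℕ) : ℕ → A → ℕ → A
  | 0, a, _ => a
  | k + 1, a, j => θ (substPow θ r k a (j / r)) (j % r)

/-- A substitution of constant length `r` is primitive if for some `k ≥ 1` every letter
occurs in every `θ^k(a)`. -/
def SubstPrimitive {A : Type*} (θ : A → ℕ → A) (r : ℕ) : Prop :=
  ∃ k, 1 ≤ k ∧ ∀ a a' : A, ∃ j < r ^ k, substPow θ r k a j = a'

/-- The action of `θ^k` on bi-infinite sequences, with the image of `x₀` beginning at
coordinate `0`. -/
def substActPow {A : Type*} (θ : A → ℕ → A) (r k : ℕ) (x : ℤ → A) : ℤ → A :=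
  fun n => substPow θ r k (x (Int.fdiv n (r ^ k))) ((Int.fmod n (r ^ k)).toNat)

/-- A bi-infinite `θ`-periodic point. -/
def IsSubstPeriodicPt {A : Type*} (θ : A → ℕ → A) (r : ℕ) (x : ℤ → A) : Prop :=
  ∃ j, 1 ≤ j ∧ substActPow θ r j x = x

/-- `X` is the substitution shift `X_θ`: the orbit closure of a bi-infinite `θ`-periodic
point. -/
def IsSubstShift {A : Type*} (θ : A → ℕ → A) (r : ℕ) (X : Set (ℤ → A)) : Prop :=
  ∃ x : ℤ → A, IsSubstPeriodicPt θ r x ∧ X = orbitClosure x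

/-- An automorphism of the subshift `X`: a self-homeomorphism of `X` commuting with the
shift. -/
def IsAut {A : Type*} (X : Set (ℤ → A)) (Φ : (ℤ → A) → (ℤ → A)) : Prop :=
  Set.BijOn Φ X X ∧ @ContinuousOn _ _ (seqTop A) (seqTop A) Φ X ∧
    (∀ x ∈ X, Φ (shiftMap x) = shiftMap (Φ x)) ∧
    ∃ Ψ : (ℤ → A) → (ℤ → A), Set.MapsTo Ψ X X ∧
      @ContinuousOn _ _ (seqTop A) (seqTop A) Ψ X ∧ ∀ x ∈ X, Ψ (Φ x) = x

/-- A topological conjugacy between the subshifts `X` and `Y`. -/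
def IsConjugacy {A B : Type*} (X : Set (ℤ → A)) (Y : Set (ℤ → B))
    (h : (ℤ → A) → (ℤ → B)) : Prop :=
  Set.BijOn h X Y ∧ @ContinuousOn _ _ (seqTop A) (seqTop B) h X ∧
    (∀ x ∈ X, h (shiftMap x) = shiftMap (h x)) ∧
    ∃ g : (ℤ → B) → (ℤ → A), Set.MapsTo g Y X ∧
      @ContinuousOn _ _ (seqTop B) (seqTop A) g Y ∧ ∀ x ∈ X, g (h x) = x

/-- `X` and `Y` are topologically conjugate subshifts. -/
def TopConjugate {A B : Type*} (X : Set (ℤ → A)) (Y : Set (ℤ → B)) : Prop :=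
  ∃ h, IsConjugacy X Y h

/-- `(P, σ^n)` is a minimal system: `P` is nonempty, `σ^n`-invariant (in both directions)
and every `σ^n`-orbit is dense in `P`. -/
def MinimalUnderPow {A : Type*} (n : ℕ) (P : Set (ℤ → A)) : Prop :=
  P.Nonempty ∧ (∀ y ∈ P, ∀ m : ℤ, shiftBy ((n : ℤ) * m) y ∈ P) ∧
    ∀ y ∈ P, P ⊆ @closure _ (seqTop A) (Set.range fun m : ℤ => shiftBy ((n : ℤ) * m) y)

/-- A cyclic `σ^n`-minimal partition of `X` with `m` members. -/
def IsCyclicMinPartition {A : Type*} (X : Set (ℤ → A)) (n m : ℕ)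
    (P : ZMod m → Set (ℤ → A)) : Prop :=
  0 < m ∧ (∀ i, @IsClosed _ (seqTop A) (P i)) ∧
    (Pairwise fun i j => Disjoint (P i) (P j)) ∧ (⋃ i, P i) = X ∧
    (∀ i, shiftMap '' P i = P (i + 1)) ∧ ∀ i, MinimalUnderPow n (P i)

/-- `Φ` has `κ`-value zero: it fixes each member of every cyclic `σ^n`-minimal
partition of `X`. -/
def KappaZero {A : Type*} (X : Set (ℤ → A)) (Φ : (ℤ → A) → (ℤ → A)) : Prop :=
  ∀ n : ℕ, 1 ≤ n → ∀ m : ℕ, ∀ P : ZMod m → Set (ℤ → A),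
    IsCyclicMinPartition X n m P → ∀ i, Φ '' P i = P i

/-- `(a, b)` is a periodic pair for `θ`. -/
def IsPeriodicPair {A : Type*} (θ : A → ℕ → A) (r : ℕ) (a b : A) : Prop :=
  a ≠ b ∧ ∃ p, 1 ≤ p ∧ ∃ j < r ^ p, substPow θ r p a j = a ∧ substPow θ r p b j = b

/-- The least period `p(a,b)` of a periodic pair. -/
def pairPeriod {A : Type*} (θ : A → ℕ → A) (r : ℕ) (a b : A) : ℕ :=
  sInf {p | 1 ≤ p ∧ ∃ j < r ^ p, substPow θ r p a j = a ∧ substPow θ r p b j = b}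

/-- `p(θ)`: the least common multiple of the periods of the periodic pairs of `θ`
(equal to `1` if there are none). -/
def substPairLcm {A : Type*} [Fintype A] (θ : A → ℕ → A) (r : ℕ) : ℕ :=
  Finset.univ.lcm fun ab : A × A =>
    if IsPeriodicPair θ r ab.1 ab.2 then pairPeriod θ r ab.1 ab.2 else 1

/-- `θ` is pair-aperiodic: every periodic pair has period `1`. -/
def PairAperiodic {A : Type*} (θ : A → ℕ → A) (r : ℕ) : Prop :=
  ∀ a b : A, IsPeriodicPair θ r a b → ∃ j < r, θ a j = a ∧ θ b j = b

/-- `(c, d)` is `k`-reachable from `(a, b)`. -/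
def PairReachable {A : Type*} (θ : A → ℕ → A) (r k : ℕ) (a b c d : A) : Prop :=
  ∃ j < r ^ k, substPow θ r k a j = c ∧ substPow θ r k b j = d

/-- `(a, b)` is an asymptotic disjoint pair. -/
def AsympDisjointPair {A : Type*} (θ : A → ℕ → A) (r : ℕ) (a b : A) : Prop :=
  ∀ k, 1 ≤ k → ∃ j < r ^ k, substPow θ r k a j ≠ substPow θ r k b j

/-- A right-infinite fixed point of `θ`. -/
def IsRightFixed {A : Type*} (θ : A → ℕ → A) (r : ℕ) (u : ℕ → A) : Prop :=
  ∀ n : ℕ, θ (u (n / r)) (n % r) = u n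

/-- A left-infinite fixed point of `θ` (only coordinates `< 0` are meaningful). -/
def IsLeftFixed {A : Type*} (θ : A → ℕ → A) (r : ℕ) (v : ℤ → A) : Prop :=
  ∀ m : ℤ, m < 0 → θ (v (Int.fdiv m r)) ((Int.fmod m r).toNat) = v m

/-- `θ` is injective: distinct letters have distinct images. -/
def SubstInjective {A : Type*} (θ : A → ℕ → A) (r : ℕ) : Prop :=
  ∀ a b : A, (∀ j < r, θ a j = θ b j) → a = b

/-- `θ` is strongly injective: injective, no two distinct right-infinite fixed points agree
on all coordinates `n ≥ 1`, and no two distinct left-infinite fixed points agree on all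
coordinates `n ≤ -2`. -/
def StronglyInjective {A : Type*} (θ : A → ℕ → A) (r : ℕ) : Prop :=
  SubstInjective θ r ∧
    (∀ u u' : ℕ → A, IsRightFixed θ r u → IsRightFixed θ r u' →
      (∀ n, 1 ≤ n → u n = u' n) → u = u') ∧
    (∀ v v' : ℤ → A, IsLeftFixed θ r v → IsLeftFixed θ r v' →
      (∀ m : ℤ, m ≤ -2 → v m = v' m) → ∀ m : ℤ, m < 0 → v m = v' m)

/-- `θ` has height one. -/
def HeightOne {A : Type*} (θ : A → ℕ → A) (r : ℕ) : Prop :=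
  ∀ u : ℕ → A, IsRightFixed θ r u →
    ∀ n, 1 ≤ n → Nat.Coprime n r → (∀ a, 1 ≤ a → u a = u 0 → n ∣ a) → n = 1

/-- The column number `c(θ)`. -/
def columnNumber {A : Type*} [Fintype A] (θ : A → ℕ → A) (r : ℕ) : ℕ :=
  sInf {c | ∃ k, 1 ≤ k ∧ ∃ j < r ^ k,
    c = (Set.range fun a : A => substPow θ r k a j).ncard}

/-- A minimal set for `θ`: a column image of cardinality `c(θ)`. -/
def IsMinimalSet {A : Type*} [Fintype A] (θ : A → ℕ → A) (r : ℕ) (M : Set A) : Prop :=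
  M.ncard = columnNumber θ r ∧
    ∃ k, 1 ≤ k ∧ ∃ j < r ^ k, M = Set.range fun a : A => substPow θ r k a j

/-- `d*(θ^k(a), θ^k(b))`: the proportion of coordinates where `θ^k(a)` and `θ^k(b)`
disagree. -/
def dStar {A : Type*} (θ : A → ℕ → A) (r k : ℕ) (a b : A) : ℝ :=
  (((Finset.range (r ^ k)).filter
      fun j => substPow θ r k a j ≠ substPow θ r k b j).card : ℝ) / ((r : ℝ) ^ k)

/-- `θ` is reduced: for no pair of distinct letters does `d*(θ^k(a), θ^k(b))` tend to `0`. -/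
def SubstReduced {A : Type*} (θ : A → ℕ → A) (r : ℕ) : Prop :=
  ∀ a b : A, a ≠ b →
    ¬ Filter.Tendsto (fun k => dStar θ r k a b) Filter.atTop (nhds (0 : ℝ))

/-- `ι : C → (ℕ → B)` presents `C` as the alphabet of `k`-blocks of the fixed point `u`
of `η`, and `ηk` as the `k`-compression `η^{(k)}` of `η`. -/
def IsCompression {B C : Type*} (η : B → ℕ → B) (r k : ℕ) (u : ℕ → B)
    (ι : C → ℕ → B) (ηk : C → ℕ → C) : Prop :=
  IsRightFixed η r u ∧
    (∀ c c' : C, (∀ j < k, ι c j = ι c' j) → c = c') ∧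
    (∀ c : C, ∃ m : ℕ, ∀ j < k, ι c j = u (m * k + j)) ∧
    (∀ m : ℕ, ∃ c : C, ∀ j < k, ι c j = u (m * k + j)) ∧
    (∀ c : C, ∀ i < r, ∀ j < k,
      ι (ηk c i) j = η (ι c ((i * k + j) / r)) ((i * k + j) % r))

/-- The `τ`-twist of a substitution: `(θ_τ(α))_j = τ^j(θ(α)_j)`. -/
def twistSubst {C : Type*} (θ : C → ℕ → C) (τ : C → C) : C → ℕ → C :=
  fun c j => τ^[j] (θ c j)

end

section AuxStmt16

private lemma substPow_add' {A : Type*} (θ : A → ℕ → A) (r : ℕ) (hr : 0 < r) :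
    ∀ (n m : ℕ) (a : A) (J i : ℕ), i < r ^ n →
      substPow θ r (m + n) a (J * r ^ n + i) = substPow θ r n (substPow θ r m a J) i := by
  intro n
  induction n with
  | zero =>
    intro m a J i hi
    rw [pow_zero] at hi
    have hi0 : i = 0 := by omega
    subst hi0
    simp [substPow]
  | succ n ih =>
    intro m a J i hi
    have e1 : J * r ^ (n + 1) + i = r * (J * r ^ n) + i := by ring
    have hdiv : (J * r ^ (n + 1) + i) / r = J * r ^ n + i / r := by
      rw [e1, Nat.mul_add_div hr]
    have hmod : (J * r ^ (n + 1) + i) % r = i % r := by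
      rw [e1, Nat.mul_add_mod]
    have hi' : i / r < r ^ n := by
      rw [Nat.div_lt_iff_lt_mul hr, ← pow_succ]
      exact hi
    show θ (substPow θ r (m + n) a ((J * r ^ (n + 1) + i) / r)) ((J * r ^ (n + 1) + i) % r) =
      θ (substPow θ r n (substPow θ r m a J) (i / r)) (i % r)
    rw [hdiv, hmod, ih m a J (i / r) hi']

private lemma colNum_le {A : Type*} [Fintype A] (θ : A → ℕ → A) (r k j : ℕ)
    (hk : 1 ≤ k) (hj : j < r ^ k) :
    columnNumber θ r ≤ (Set.range fun a : A => substPow θ r k a j).ncard :=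
  Nat.sInf_le ⟨k, hk, j, hj, rfl⟩

private lemma min_image' {A : Type*} [Fintype A] (θ : A → ℕ → A) (r : ℕ) (hr : 0 < r)
    {M : Set A} (hM : IsMinimalSet θ r M) {k j : ℕ} (hk : 1 ≤ k) (hj : j < r ^ k) :
    IsMinimalSet θ r ((fun a => substPow θ r k a j) '' M) := by
  obtain ⟨hcard, k1, hk1, j1, hj1, hMeq⟩ := hM
  have hidx : j1 * r ^ k + j < r ^ (k1 + k) := by
    calc j1 * r ^ k + j < (j1 + 1) * r ^ k := by nlinarith [pow_pos hr k]
    _ ≤ r ^ k1 * r ^ k := by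
        have : j1 + 1 ≤ r ^ k1 := hj1
        exact Nat.mul_le_mul_right _ this
    _ = r ^ (k1 + k) := (pow_add r k1 k).symm
  have hrange : ((fun a => substPow θ r k a j) '' M) =
      Set.range fun a : A => substPow θ r (k1 + k) a (j1 * r ^ k + j) := by
    rw [hMeq, ← Set.range_comp]
    apply congrArg
    funext a
    exact (substPow_add' θ r hr k k1 a j1 j hj).symm
  constructor
  · apply le_antisymm
    · calc ((fun a => substPow θ r k a j) '' M).ncard ≤ M.ncard :=
        Set.ncard_image_le M.toFinite
      _ = columnNumber θ r := hcard
    · rw [hrange]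
      exact colNum_le θ r (k1 + k) (j1 * r ^ k + j) (by omega) hidx
  · exact ⟨k1 + k, by omega, j1 * r ^ k + j, hidx, hrange⟩

private lemma dStar_nonneg' {A : Type*} (θ : A → ℕ → A) (r k : ℕ) (a b : A) :
    0 ≤ dStar θ r k a b := by
  unfold dStar
  positivity

private lemma q_injOn_min' {A A' : Type*} [Fintype A] (θ : A → ℕ → A) (r : ℕ) (hr : 2 ≤ r)
    (q : A → A')
    (hqrel : ∀ a b : A, q a = q b ↔
      Filter.Tendsto (fun k => dStar θ r k a b) Filter.atTop (nhds (0 : ℝ)))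
    {M : Set A} (hM : IsMinimalSet θ r M) : Set.InjOn q M := by
  intro a ha b hb hab
  by_contra hne
  have hsep : ∀ k, 1 ≤ k → ∀ j < r ^ k, substPow θ r k a j ≠ substPow θ r k b j := by
    intro k hk j hj heq
    have hmin := min_image' θ r (by omega) hM hk hj
    have h1 : ((fun x => substPow θ r k x j) '' M) =
        ((fun x => substPow θ r k x j) '' (M \ {b})) := by
      apply subset_antisymm
      · rintro x ⟨m, hm, rfl⟩
        by_cases hmb : m = b
        · exact ⟨a, ⟨ha, by simpa using hne⟩, by rw [hmb]; exact heq⟩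
        · exact ⟨m, ⟨hm, by simpa using hmb⟩, rfl⟩
      · exact Set.image_mono Set.diff_subset
    have h2 : ((fun x => substPow θ r k x j) '' M).ncard ≤ (M \ {b}).ncard := by
      rw [h1]; exact Set.ncard_image_le (Set.toFinite _)
    have h3 : (M \ {b}).ncard < M.ncard := by
      apply Set.ncard_lt_ncard _ M.toFinite
      refine ⟨Set.diff_subset, fun hsub => ?_⟩
      have := hsub hb
      simp at this
    rw [hmin.1] at h2
    have hMc := hM.1
    omega
  have hone : ∀ k, 1 ≤ k → dStar θ r k a b = 1 := by
    intro k hk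
    unfold dStar
    rw [Finset.filter_true_of_mem (fun j hj => hsep k hk j (Finset.mem_range.mp hj)),
      Finset.card_range]
    push_cast
    rw [div_self (by positivity)]
  have h0 := (hqrel a b).mp hab
  have hcontra : Filter.Tendsto (fun _ : ℕ => (1 : ℝ)) Filter.atTop (nhds 0) := by
    apply h0.congr'
    filter_upwards [Filter.eventually_ge_atTop 1] with k hk
    exact hone k hk
  have := tendsto_nhds_unique hcontra tendsto_const_nhds
  norm_num at this

private lemma q_sim_col' {A : Type*} (θ : A → ℕ → A) (r : ℕ) (hr : 2 ≤ r)
    {a b : A} (h : Filter.Tendsto (fun k => dStar θ r k a b) Filter.atTop (nhds (0 : ℝ)))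
    {k j : ℕ} (hj : j < r ^ k) :
    Filter.Tendsto (fun m => dStar θ r m (substPow θ r k a j) (substPow θ r k b j))
      Filter.atTop (nhds (0 : ℝ)) := by
  have hr0 : 0 < r := by omega
  have hbound : ∀ m, dStar θ r m (substPow θ r k a j) (substPow θ r k b j) ≤
      (r : ℝ) ^ k * dStar θ r (k + m) a b := by
    intro m
    have hcard : ((Finset.range (r ^ m)).filter fun i =>
        substPow θ r m (substPow θ r k a j) i ≠ substPow θ r m (substPow θ r k b j) i).card ≤
        ((Finset.range (r ^ (k + m))).filter fun J =>
          substPow θ r (k + m) a J ≠ substPow θ r (k + m) b J).card := by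
      apply Finset.card_le_card_of_injOn (fun i => j * r ^ m + i)
      · intro i hi
        simp only [Finset.mem_coe, Finset.mem_filter, Finset.mem_range] at hi ⊢
        obtain ⟨hi1, hi2⟩ := hi
        refine ⟨?_, ?_⟩
        · calc j * r ^ m + i < (j + 1) * r ^ m := by nlinarith [pow_pos hr0 m]
          _ ≤ r ^ k * r ^ m := Nat.mul_le_mul_right _ hj
          _ = r ^ (k + m) := (pow_add r k m).symm
        · rw [substPow_add' θ r hr0 m k a j i hi1, substPow_add' θ r hr0 m k b j i hi1]
          exact hi2
      · intro x _ y _ hxy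
        simpa using hxy
    unfold dStar
    have hrm : (0 : ℝ) < (r : ℝ) ^ m := by positivity
    have hrew : (r : ℝ) ^ k * ((((Finset.range (r ^ (k + m))).filter fun J =>
          substPow θ r (k + m) a J ≠ substPow θ r (k + m) b J).card : ℝ) / (r : ℝ) ^ (k + m)) =
        (((Finset.range (r ^ (k + m))).filter fun J =>
          substPow θ r (k + m) a J ≠ substPow θ r (k + m) b J).card : ℝ) / (r : ℝ) ^ m := by
      rw [pow_add]
      field_simp
      ring
    rw [hrew]
    have hcard' : ((((Finset.range (r ^ m)).filter fun i =>
        substPow θ r m (substPow θ r k a j) i ≠ substPow θ r m (substPow θ r k b j) i).card : ℕ) : ℝ) ≤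
        (((Finset.range (r ^ (k + m))).filter fun J =>
          substPow θ r (k + m) a J ≠ substPow θ r (k + m) b J).card : ℝ) := by
      exact_mod_cast hcard
    exact div_le_div_of_nonneg_right hcard' hrm.le
  apply squeeze_zero (fun m => dStar_nonneg' θ r m _ _) hbound
  have h1 : Filter.Tendsto (fun m => dStar θ r (k + m) a b) Filter.atTop (nhds 0) := by
    have h2 := h.comp (Filter.tendsto_add_atTop_nat k)
    exact h2.congr fun m => by
      show dStar θ r (m + k) a b = dStar θ r (k + m) a b
      rw [add_comm]
  simpa using h1.const_mul ((r : ℝ) ^ k)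

end AuxStmt16

/-- passing to the reduction `θ'` of `θ` (quotient by `a ∼ b` iff
`d*(θ^k(a),θ^k(b)) → 0`, presented by the surjection `q`) preserves the column number,
`f` descends to `f'` on the quotient alphabet, and the generating sets of permutations
(hence the groups `G(θ)` and `G(θ')`) coincide. -/
theorem stmt_16 {A A' : Type*} [Fintype A] [Fintype A']
    (θ : A → ℕ → A) (r : ℕ) (hr : 2 ≤ r) (hprim : SubstPrimitive θ r)
    (q : A → A') (hq : Function.Surjective q)
    (hqrel : ∀ a b : A, q a = q b ↔
      Filter.Tendsto (fun k => dStar θ r k a b) Filter.atTop (nhds (0 : ℝ)))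
    (θ' : A' → ℕ → A') (hθ' : ∀ a : A, ∀ j < r, θ' (q a) j = q (θ a j))
    (c : ℕ) (hc : c = columnNumber θ r)
    (M0 : Set A) (k0 j0 : ℕ) (hM0 : IsMinimalSet θ r M0) (hk0 : 1 ≤ k0)
    (hj0 : j0 < r ^ k0) (hM0eq : (Set.range fun a : A => substPow θ r k0 a j0) = M0)
    (hfix : ∀ a ∈ M0, substPow θ r k0 a j0 = a)
    (f0 : A → Fin c) (hf0 : Set.BijOn f0 M0 Set.univ) :
    columnNumber θ' r = columnNumber θ r ∧
    (∀ a b : A, q a = q b →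
      f0 (substPow θ r k0 a j0) = f0 (substPow θ r k0 b j0)) ∧
    ∃ f' : A' → Fin c, (∀ a : A, f' (q a) = f0 (substPow θ r k0 a j0)) ∧
      {s : Equiv.Perm (Fin c) | ∃ (M : Set A) (j : ℕ),
          IsMinimalSet θ r M ∧ j < r ∧
          ∀ a ∈ M, s⁻¹ (f0 (substPow θ r k0 a j0)) =
            f0 (substPow θ r k0 (θ a j) j0)} =
      {s : Equiv.Perm (Fin c) | ∃ (M' : Set A') (j : ℕ),
          IsMinimalSet θ' r M' ∧ j < r ∧
          ∀ a' ∈ M', s⁻¹ (f' a') = f' (θ' a' j)} := by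
  have hr0 : 0 < r := by omega
  have hLq : ∀ k (a : A), ∀ j < r ^ k, substPow θ' r k (q a) j = q (substPow θ r k a j) := by
    intro k
    induction k with
    | zero => intro a j hj; rfl
    | succ k ih =>
      intro a j hj
      have hjr : j / r < r ^ k := by
        rw [Nat.div_lt_iff_lt_mul hr0, ← pow_succ]; exact hj
      show θ' (substPow θ' r k (q a) (j / r)) (j % r) = q (θ (substPow θ r k a (j / r)) (j % r))
      rw [ih a (j / r) hjr, hθ' _ _ (Nat.mod_lt _ hr0)]
  have hinj0 : Set.InjOn q M0 := q_injOn_min' θ r hr q hqrel hM0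
  have hmem : ∀ a : A, substPow θ r k0 a j0 ∈ M0 := fun a => hM0eq ▸ Set.mem_range_self a
  have hkey : ∀ a b : A, q a = q b → substPow θ r k0 a j0 = substPow θ r k0 b j0 := by
    intro a b hab
    have h := (hqrel a b).mp hab
    have hsim := q_sim_col' θ r hr h hj0
    exact hinj0 (hmem a) (hmem b) ((hqrel _ _).mpr hsim)
  have hcol' : ∀ k, ∀ j < r ^ k, (Set.range fun a' : A' => substPow θ' r k a' j) =
      q '' (Set.range fun a : A => substPow θ r k a j) := by
    intro k j hj
    ext x
    simp only [Set.mem_range, Set.mem_image]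
    constructor
    · rintro ⟨a', rfl⟩
      obtain ⟨a, rfl⟩ := hq a'
      exact ⟨substPow θ r k a j, ⟨a, rfl⟩, (hLq k a j hj).symm⟩
    · rintro ⟨y, ⟨a, rfl⟩, rfl⟩
      exact ⟨q a, hLq k a j hj⟩
  have hpart1 : columnNumber θ' r = columnNumber θ r := by
    apply le_antisymm
    · have h1 : columnNumber θ' r ≤ (Set.range fun a' : A' => substPow θ' r k0 a' j0).ncard :=
        colNum_le θ' r k0 j0 hk0 hj0
      rw [hcol' k0 j0 hj0, hM0eq] at h1
      rwa [Set.ncard_image_of_injOn hinj0, hM0.1] at h1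
    · have hne : {n | ∃ k, 1 ≤ k ∧ ∃ j < r ^ k,
          n = (Set.range fun a' : A' => substPow θ' r k a' j).ncard}.Nonempty :=
        ⟨_, 1, le_refl 1, 0, by simpa using hr0, rfl⟩
      have hmem' : columnNumber θ' r ∈ {n | ∃ k, 1 ≤ k ∧ ∃ j < r ^ k,
          n = (Set.range fun a' : A' => substPow θ' r k a' j).ncard} := Nat.sInf_mem hne
      obtain ⟨k, hk, j, hj, hceq⟩ := hmem'
      have hmin := min_image' θ r hr0 hM0 hk hj
      have hinjM := q_injOn_min' θ r hr q hqrel hmin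
      have hsub : q '' ((fun a => substPow θ r k a j) '' M0) ⊆
          (Set.range fun a' : A' => substPow θ' r k a' j) := by
        rw [hcol' k j hj]
        exact Set.image_mono (Set.image_subset_range _ _)
      calc columnNumber θ r = ((fun a => substPow θ r k a j) '' M0).ncard := hmin.1.symm
        _ = (q '' ((fun a => substPow θ r k a j) '' M0)).ncard :=
            (Set.ncard_image_of_injOn hinjM).symm
        _ ≤ (Set.range fun a' : A' => substPow θ' r k a' j).ncard :=
            Set.ncard_le_ncard hsub (Set.toFinite _)
        _ = columnNumber θ' r := hceq.symm
  have hpart2 : ∀ a b : A, q a = q b →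
      f0 (substPow θ r k0 a j0) = f0 (substPow θ r k0 b j0) :=
    fun a b h => congrArg f0 (hkey a b h)
  refine ⟨hpart1, hpart2, fun a' => f0 (substPow θ r k0 (Classical.choose (hq a')) j0), ?_, ?_⟩
  · intro a
    exact hpart2 _ _ (Classical.choose_spec (hq (q a)))
  · have hf'q : ∀ a : A, f0 (substPow θ r k0 (Classical.choose (hq (q a))) j0) =
        f0 (substPow θ r k0 a j0) := fun a => hpart2 _ _ (Classical.choose_spec (hq (q a)))
    ext s
    simp only [Set.mem_setOf_eq]
    constructor
    · rintro ⟨M, j, hMmin, hjr, hs⟩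
      have hinjM := q_injOn_min' θ r hr q hqrel hMmin
      refine ⟨q '' M, j, ⟨?_, ?_⟩, hjr, ?_⟩
      · rw [Set.ncard_image_of_injOn hinjM, hMmin.1, hpart1]
      · obtain ⟨k, hk, jj, hjj, hMeq⟩ := hMmin.2
        exact ⟨k, hk, jj, hjj, by rw [hMeq, hcol' k jj hjj]⟩
      · rintro a' ⟨a, haM, rfl⟩
        rw [hf'q a, hθ' _ _ hjr, hf'q (θ a j)]
        exact hs a haM
    · rintro ⟨M', j, hM'min, hjr, hs⟩
      obtain ⟨k, hk, jj, hjj, hM'eq⟩ := hM'min.2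
      have hmin := min_image' θ r hr0 hM0 hk hjj
      refine ⟨(fun a => substPow θ r k a jj) '' M0, j, hmin, hjr, ?_⟩
      rintro a ⟨a0, ha0, rfl⟩
      have hqa : q (substPow θ r k a0 jj) ∈ M' := by
        rw [hM'eq, hcol' k jj hjj]
        exact ⟨substPow θ r k a0 jj, Set.mem_range_self a0, rfl⟩
      have h := hs _ hqa
      rw [hf'q, hθ' _ _ hjr, hf'q] at h
      exact h
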